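/- Let m ≥ 1 and let (X_j, Y_j, v, w) be a representation datum. Then for every integer i ≥ 1, Tr(A^i X₀ Y₀) = Tr(A^i Y_{m−1} X_{m−1}) − (λ₁ + λ₂ + ⋯ + λ_{m−1})·Tr(A^i), where A = Y_{m−1}⋯Y₁Y₀. -/
import Mathlib


open Matrix

namespace CM

noncomputable section

variable {α : ℕ → ℕ}

/-- Reindex a square complex matrix along an equality of sizes. -/
def recast {a b : ℕ} (h : a = b) (M : Matrix (Fin a) (Fin a) ℂ) :
    Matrix (Fin b) (Fin b) ℂ :=
  M.submatrix (Fin.cast h.symm) (Fin.cast h.symm)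

/-- `yprod Y k = Y (k-1) * ⋯ * Y 1 * Y 0`. -/
def yprod (Y : ∀ i : ℕ, Matrix (Fin (α (i + 1))) (Fin (α i)) ℂ) :
    (k : ℕ) → Matrix (Fin (α k)) (Fin (α 0)) ℂ
  | 0 => 1
  | k + 1 => Y k * yprod Y k

/-- `xprod X k = X 0 * X 1 * ⋯ * X (k-1)`. -/
def xprod (X : ∀ i : ℕ, Matrix (Fin (α i)) (Fin (α (i + 1))) ℂ) :
    (k : ℕ) → Matrix (Fin (α 0)) (Fin (α k)) ℂ
  | 0 => 1
  | k + 1 => xprod X k * X k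

/-- `ysegFrom Y i k = Y (i+k-1) * ⋯ * Y (i+1) * Y i`. -/
def ysegFrom (Y : ∀ i : ℕ, Matrix (Fin (α (i + 1))) (Fin (α i)) ℂ) (i : ℕ) :
    (k : ℕ) → Matrix (Fin (α (i + k))) (Fin (α i)) ℂ
  | 0 => (1 : Matrix (Fin (α i)) (Fin (α i)) ℂ)
  | k + 1 => Y (i + k) * ysegFrom Y i k

/-- `xsegFrom X i k = X i * X (i+1) * ⋯ * X (i+k-1)`. -/
def xsegFrom (X : ∀ i : ℕ, Matrix (Fin (α i)) (Fin (α (i + 1))) ℂ) (i : ℕ) :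
    (k : ℕ) → Matrix (Fin (α i)) (Fin (α (i + k))) ℂ
  | 0 => (1 : Matrix (Fin (α i)) (Fin (α i)) ℂ)
  | k + 1 => xsegFrom X i k * X (i + k)

/-- A tuple `(X_i, Y_i, v, w)` of representation data for the framed cyclic quiver with
`m = p + 1` vertices `0, 1, …, p` (only the components with index `≤ p` are meaningful;
the remaining ones are required to vanish where relevant). -/
structure Datum (α : ℕ → ℕ) where
  X : ∀ i : ℕ, Matrix (Fin (α i)) (Fin (α (i + 1))) ℂ
  Y : ∀ i : ℕ, Matrix (Fin (α (i + 1))) (Fin (α i)) ℂ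
  v : Fin (α 0) → ℂ
  w : Fin (α 0) → ℂ

/-- The relations (qv1)–(qv2) for the deformed preprojective algebra of the framed
cyclic quiver with `m = p + 1` vertices. -/
def IsRepDatum (p : ℕ) (lam : ℕ → ℂ) (h0 : α (p + 1) = α 0) (d : Datum α) : Prop :=
  d.X 0 * d.Y 0 - recast h0 (d.Y p * d.X p) + vecMulVec d.v d.w
      = lam 0 • (1 : Matrix (Fin (α 0)) (Fin (α 0)) ℂ) ∧
    ∀ j : ℕ, j < p → d.X (j + 1) * d.Y (j + 1) - d.Y j * d.X j = lam (j + 1) • 1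

/-- `A = Y_{m-1} ⋯ Y_1 Y_0`, as a square matrix at the vertex `0`. -/
def Amat (p : ℕ) (h0 : α (p + 1) = α 0)
    (Y : ∀ i : ℕ, Matrix (Fin (α (i + 1))) (Fin (α i)) ℂ) :
    Matrix (Fin (α 0)) (Fin (α 0)) ℂ :=
  (yprod Y (p + 1)).submatrix (Fin.cast h0.symm) id

/-- `B = X_0 X_1 ⋯ X_{m-1}`, as a square matrix at the vertex `0`. -/
def Bmat (p : ℕ) (h0 : α (p + 1) = α 0)
    (X : ∀ i : ℕ, Matrix (Fin (α i)) (Fin (α (i + 1))) ℂ) :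
    Matrix (Fin (α 0)) (Fin (α 0)) ℂ :=
  (xprod X (p + 1)).submatrix id (Fin.cast h0.symm)

/-- `C_k = Y_{m-1} ⋯ Y_{m-k} X_{m-k} ⋯ X_{m-1}` (for `k ≤ m`; junk value `1` otherwise),
as a square matrix at the vertex `0`; `C_0 = Id`. -/
def Cmat (p : ℕ) (h0 : α (p + 1) = α 0)
    (X : ∀ i : ℕ, Matrix (Fin (α i)) (Fin (α (i + 1))) ℂ)
    (Y : ∀ i : ℕ, Matrix (Fin (α (i + 1))) (Fin (α i)) ℂ) (k : ℕ) :
    Matrix (Fin (α 0)) (Fin (α 0)) ℂ :=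
  if h : k ≤ p + 1 then
    recast ((congrArg α (by omega : p + 1 - k + k = p + 1)).trans h0)
      (ysegFrom Y (p + 1 - k) k * xsegFrom X (p + 1 - k) k)
  else 1

/-- `Y_{m-1} ⋯ Y_{i+1}` viewed as a matrix from vertex `i+1` to vertex `0` (zero for `i > p`). -/
def ycap (p : ℕ) (h0 : α (p + 1) = α 0)
    (Y : ∀ i : ℕ, Matrix (Fin (α (i + 1))) (Fin (α i)) ℂ) (i : ℕ) :
    Matrix (Fin (α 0)) (Fin (α (i + 1))) ℂ :=
  if h : i ≤ p then
    (ysegFrom Y (i + 1) (p - i)).submatrix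
      (Fin.cast (h0.symm.trans (congrArg α (by omega : p + 1 = i + 1 + (p - i))))) id
  else 0

/-- `X_{i+1} ⋯ X_{m-1}` viewed as a matrix from vertex `0` to vertex `i+1` (zero for `i > p`). -/
def xcap (p : ℕ) (h0 : α (p + 1) = α 0)
    (X : ∀ i : ℕ, Matrix (Fin (α i)) (Fin (α (i + 1))) ℂ) (i : ℕ) :
    Matrix (Fin (α (i + 1))) (Fin (α 0)) ℂ :=
  if h : i ≤ p then
    (xsegFrom X (i + 1) (p - i)).submatrix id
      (Fin.cast (h0.symm.trans (congrArg α (by omega : p + 1 = i + 1 + (p - i)))))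
  else 0

/-- The transformation `Ψ_{k,μ}`:
`X_i ↦ X_i + μ • Y_{i-1} ⋯ Y_0 (Y_{m-1} ⋯ Y_0)^{k-1} Y_{m-1} ⋯ Y_{i+1}`. -/
def psiT (p : ℕ) (h0 : α (p + 1) = α 0) (k : ℕ) (μ : ℂ) (d : Datum α) : Datum α where
  X := fun i => d.X i + μ • (yprod d.Y i * Amat p h0 d.Y ^ (k - 1) * ycap p h0 d.Y i)
  Y := d.Y
  v := d.v
  w := d.w

/-- The transformation `Φ_{k,ν}`:
`Y_i ↦ Y_i + ν • X_{i+1} ⋯ X_{m-1} (X_0 ⋯ X_{m-1})^{k-1} X_0 ⋯ X_{i-1}`. -/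
def phiT (p : ℕ) (h0 : α (p + 1) = α 0) (k : ℕ) (ν : ℂ) (d : Datum α) : Datum α where
  X := d.X
  Y := fun i => d.Y i + ν • (xcap p h0 d.X i * Bmat p h0 d.X ^ (k - 1) * xprod d.X i)
  v := d.v
  w := d.w

/-- Base change by a family of (invertible) matrices `g_i`. -/
def bcT (p : ℕ) (g : ∀ i : ℕ, Matrix (Fin (α i)) (Fin (α i)) ℂ) (d : Datum α) : Datum α where
  X := fun i => if i ≤ p then g i * d.X i * (g (i + 1))⁻¹ else d.X i
  Y := fun i => if i ≤ p then g (i + 1) * d.Y i * (g i)⁻¹ else d.Y i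
  v := g 0 *ᵥ d.v
  w := vecMul d.w (g 0)⁻¹

/-- One elementary move: a `Ψ_{k,μ}`, a `Φ_{k,ν}`, or a base change. -/
def Step (p : ℕ) (h0 : α (p + 1) = α 0) (d d' : Datum α) : Prop :=
  (∃ k : ℕ, ∃ μ : ℂ, 1 ≤ k ∧ d' = psiT p h0 k μ d) ∨
  (∃ k : ℕ, ∃ ν : ℂ, 1 ≤ k ∧ d' = phiT p h0 k ν d) ∨
  (∃ g : ∀ i : ℕ, Matrix (Fin (α i)) (Fin (α i)) ℂ,
      (∀ i, IsUnit (g i)) ∧ g (p + 1) = recast h0.symm (g 0) ∧ d' = bcT p g d)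

/-- `λ` is generic: `λ·β ≠ 0` for every root `β` of the affine quiver of type `Ã_{m-1}`. -/
def Generic (p : ℕ) (lam : ℕ → ℂ) : Prop :=
  (∑ t ∈ Finset.range (p + 1), lam t) ≠ 0 ∧
    ∀ i j : ℕ, 1 ≤ i → i ≤ j → j ≤ p → ∀ k : ℤ,
      (∑ t ∈ Finset.Icc i j, lam t) + (k : ℂ) * ∑ t ∈ Finset.range (p + 1), lam t ≠ 0



section Aux

theorem my_submul_left {a b c d : ℕ} (f : Fin a → Fin b) (M : Matrix (Fin b) (Fin c) ℂ)
    (N : Matrix (Fin c) (Fin d) ℂ) :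
    M.submatrix f id * N = (M * N).submatrix f id := by ext r s; simp [Matrix.mul_apply]

theorem my_sub_left_right {a b c a' c' : ℕ} (f : Fin a' → Fin a) (g : Fin c' → Fin c)
    (M : Matrix (Fin a) (Fin b) ℂ) (N : Matrix (Fin b) (Fin c) ℂ) :
    M.submatrix f id * N.submatrix id g = (M * N).submatrix f g := by
  ext r s; simp [Matrix.mul_apply]

theorem my_sub_split {a b c a' c' : ℕ} (f : Fin a' → Fin a) (g : Fin c' → Fin c)
    (M : Matrix (Fin a) (Fin b) ℂ) (N : Matrix (Fin b) (Fin c) ℂ) :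
    (M * N).submatrix f g = M.submatrix f id * N.submatrix id g :=
  (my_sub_left_right f g M N).symm

theorem my_one_cast_mul {a b c : ℕ} (h : a = b) (M : Matrix (Fin b) (Fin c) ℂ) :
    ((1 : Matrix (Fin b) (Fin b) ℂ).submatrix (Fin.cast h) id) * M
      = M.submatrix (Fin.cast h) id := by
  subst h; simp

theorem my_Ycast {α : ℕ → ℕ} (Y : ∀ i : ℕ, Matrix (Fin (α (i + 1))) (Fin (α i)) ℂ) {a b : ℕ}
    (h : a = b) :
    Y b = (Y a).submatrix (Fin.cast (congrArg (fun t => α (t+1)) h.symm))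
      (Fin.cast (congrArg α h.symm)) := by subst h; simp

theorem my_yprod_cast {α : ℕ → ℕ} (Y : ∀ i : ℕ, Matrix (Fin (α (i + 1))) (Fin (α i)) ℂ)
    {a b : ℕ} (h : a = b) :
    yprod Y b = (yprod Y a).submatrix (Fin.cast (congrArg α h.symm)) id := by subst h; simp

theorem my_cast_mul_cast2 {a b c d e : ℕ} (h : a = b) (f : Fin c → Fin d)
    (P : Matrix (Fin d) (Fin b) ℂ) (N : Matrix (Fin b) (Fin e) ℂ) :
    P.submatrix f (Fin.cast h) * N.submatrix (Fin.cast h) id = (P * N).submatrix f id := by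
  subst h; simp [my_submul_left]

theorem my_powMN {a b : ℕ} (s : ℕ) (M : Matrix (Fin a) (Fin b) ℂ) (N : Matrix (Fin b) (Fin a) ℂ) :
    (M * N) ^ s * M = M * (N * M) ^ s := by
  induction s with
  | zero => simp
  | succ s ih =>
    rw [pow_succ, Matrix.mul_assoc, Matrix.mul_assoc M N M, ← Matrix.mul_assoc ((M*N)^s), ih,
      pow_succ, Matrix.mul_assoc]

theorem my_trace_pow {a b : ℕ} (s : ℕ) (M : Matrix (Fin a) (Fin b) ℂ)
    (N : Matrix (Fin b) (Fin a) ℂ) :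
    ((M * N) ^ (s + 1)).trace = ((N * M) ^ (s + 1)).trace := by
  rw [pow_succ, ← Matrix.mul_assoc, my_powMN, Matrix.trace_mul_comm, pow_succ', ← Matrix.mul_assoc]

theorem yprod_split {α : ℕ → ℕ} (Y : ∀ i : ℕ, Matrix (Fin (α (i + 1))) (Fin (α i)) ℂ) (j : ℕ) :
    ∀ k : ℕ, yprod Y (j + k) = ysegFrom Y j k * yprod Y j
  | 0 => by simp [ysegFrom]
  | k + 1 => by
    show yprod Y ((j + k) + 1) = _
    rw [yprod, yprod_split Y j k, ysegFrom, Matrix.mul_assoc]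

theorem ysegFrom_peel {α : ℕ → ℕ} (Y : ∀ i : ℕ, Matrix (Fin (α (i + 1))) (Fin (α i)) ℂ) (j : ℕ) :
    ∀ k : ℕ, ysegFrom Y j (k+1) =
      (ysegFrom Y (j+1) k).submatrix
        (Fin.cast (congrArg α (show j + (k+1) = (j+1)+k by omega))) id * Y j
  | 0 => by
    have e1 : ysegFrom Y j (0+1) = Y (j+0) * ysegFrom Y j 0 := rfl
    have e2 : ysegFrom Y j 0 = (1 : Matrix (Fin (α j)) (Fin (α j)) ℂ) := rfl
    have e3 : ysegFrom Y (j+1) 0 = (1 : Matrix (Fin (α (j+1))) (Fin (α (j+1))) ℂ) := rfl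
    rw [e1, e2, e3, Matrix.mul_one, my_one_cast_mul]
    exact my_Ycast Y (by omega)
  | k + 1 => by
    have e1 : ysegFrom Y j (k+1+1) = Y (j+(k+1)) * ysegFrom Y j (k+1) := rfl
    have e2 : ysegFrom Y (j+1) (k+1) = Y ((j+1)+k) * ysegFrom Y (j+1) k := rfl
    rw [e1, e2, ysegFrom_peel Y j k, my_Ycast Y (show (j+1)+k = j+(k+1) by omega),
      ← Matrix.mul_assoc, my_cast_mul_cast2, my_submul_left]

/-- Decomposition `R_j * L_j = A`. -/
theorem my_decompA {α : ℕ → ℕ} (p : ℕ) (h0 : α (p + 1) = α 0)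
    (Y : ∀ i : ℕ, Matrix (Fin (α (i + 1))) (Fin (α i)) ℂ) (j k : ℕ) (h : j + k = p + 1) :
    (ysegFrom Y j k).submatrix (Fin.cast (h0.symm.trans (congrArg α h.symm))) id * yprod Y j
      = Amat p h0 Y := by
  rw [my_submul_left, ← yprod_split, Amat, my_yprod_cast Y h]
  rfl

/-- The chain of trace identities along the relations (qv2). -/
theorem my_chain {α : ℕ → ℕ} (p : ℕ) (h0 : α (p + 1) = α 0) (lam : ℕ → ℂ) (d : Datum α)
    (hqv2 : ∀ j : ℕ, j < p → d.X (j + 1) * d.Y (j + 1) - d.Y j * d.X j = lam (j + 1) • 1)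
    (n : ℕ) :
    ∀ j k (h : j + (k + 1) = p + 1),
      ((yprod d.Y j * (ysegFrom d.Y j (k + 1)).submatrix
          (Fin.cast (h0.symm.trans (congrArg α h.symm))) id) ^ (n + 1) * (d.X j * d.Y j)).trace
        = ((Amat p h0 d.Y) ^ (n + 1) * (d.X 0 * d.Y 0)).trace
          + (∑ t ∈ Finset.Icc 1 j, lam t) * ((Amat p h0 d.Y) ^ (n + 1)).trace := by
  intro j
  induction j with
  | zero =>
    intro k h
    have hS : (ysegFrom d.Y 0 (k + 1)).submatrix
        (Fin.cast (h0.symm.trans (congrArg α h.symm))) id = Amat p h0 d.Y := by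
      have h2 := my_decompA p h0 d.Y 0 (k + 1) h
      rwa [show yprod d.Y 0 = (1 : Matrix (Fin (α 0)) (Fin (α 0)) ℂ) from rfl,
        Matrix.mul_one] at h2
    rw [show yprod d.Y 0 = (1 : Matrix (Fin (α 0)) (Fin (α 0)) ℂ) from rfl, Matrix.one_mul, hS]
    simp
  | succ j ih =>
    intro k h
    have h2 : j + (k + 1 + 1) = p + 1 := by omega
    have hjp : j < p := by omega
    have hrel : d.X (j + 1) * d.Y (j + 1) = d.Y j * d.X j + lam (j + 1) • 1 := by
      have hq := hqv2 j hjp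
      rw [sub_eq_iff_eq_add] at hq
      rw [hq]; exact add_comm _ _
    set L := yprod d.Y (j + 1) with hL
    set R := (ysegFrom d.Y (j + 1) (k + 1)).submatrix
        (Fin.cast (h0.symm.trans (congrArg α h.symm))) id with hR
    set A := Amat p h0 d.Y with hA
    have hRL : R * L = A := my_decompA p h0 d.Y (j + 1) (k + 1) h
    have htp : ((L * R) ^ (n + 1)).trace = (A ^ (n + 1)).trace := by
      rw [my_trace_pow, hRL]
    have hRY : R * d.Y j = (ysegFrom d.Y j (k + 1 + 1)).submatrix
        (Fin.cast (h0.symm.trans (congrArg α h2.symm))) id := by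
      rw [ysegFrom_peel d.Y j (k + 1), my_submul_left, my_submul_left,
        Matrix.submatrix_submatrix]
      rfl
    have hmove : ((L * R) ^ (n + 1) * (d.Y j * d.X j)).trace
        = ((yprod d.Y j * (ysegFrom d.Y j (k + 1 + 1)).submatrix
            (Fin.cast (h0.symm.trans (congrArg α h2.symm))) id) ^ (n + 1)
            * (d.X j * d.Y j)).trace := by
      have hLsplit : L = d.Y j * yprod d.Y j := rfl
      rw [← hRY, ← Matrix.mul_assoc ((L * R) ^ (n+1)), hLsplit,
        Matrix.mul_assoc (d.Y j) (yprod d.Y j) R, my_powMN, Matrix.mul_assoc,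
        Matrix.trace_mul_comm, Matrix.mul_assoc, Matrix.mul_assoc]
    calc ((L * R) ^ (n + 1) * (d.X (j + 1) * d.Y (j + 1))).trace
        = ((L * R) ^ (n + 1) * (d.Y j * d.X j)).trace
            + lam (j + 1) * ((L * R) ^ (n + 1)).trace := by
          rw [hrel, Matrix.mul_add, Matrix.mul_smul, Matrix.mul_one, Matrix.trace_add,
            Matrix.trace_smul, smul_eq_mul]
      _ = (A ^ (n + 1) * (d.X 0 * d.Y 0)).trace
            + (∑ t ∈ Finset.Icc 1 j, lam t) * (A ^ (n + 1)).trace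
            + lam (j + 1) * (A ^ (n + 1)).trace := by
          rw [hmove, htp, ih (k + 1) h2]
      _ = (A ^ (n + 1) * (d.X 0 * d.Y 0)).trace
            + (∑ t ∈ Finset.Icc 1 (j + 1), lam t) * (A ^ (n + 1)).trace := by
          rw [Finset.sum_Icc_succ_top (by omega : 1 ≤ j + 1)]
          ring

end Aux

/-- For a representation datum (`m = p + 1 ≥ 1`) and every `i ≥ 1`,
`Tr(A^i X₀ Y₀) = Tr(A^i Y_{m−1} X_{m−1}) − (λ₁ + ⋯ + λ_{m−1})·Tr(A^i)`,
where `A = Y_{m−1} ⋯ Y₁ Y₀`. -/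
theorem statement13 (p : ℕ) (α : ℕ → ℕ) (lam : ℕ → ℂ) (h0 : α (p + 1) = α 0)
    (d : Datum α) (hd : IsRepDatum p lam h0 d) (i : ℕ) (hi : 1 ≤ i) :
    (Amat p h0 d.Y ^ i * (d.X 0 * d.Y 0)).trace
      = (Amat p h0 d.Y ^ i * recast h0 (d.Y p * d.X p)).trace
        - (∑ t ∈ Finset.Icc 1 p, lam t) * (Amat p h0 d.Y ^ i).trace := by
  obtain ⟨hqv1, hqv2⟩ := hd
  obtain ⟨n, rfl⟩ : ∃ n, i = n + 1 := ⟨i - 1, by omega⟩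
  set A := Amat p h0 d.Y with hA
  have hrfl : p + (0 + 1) = p + 1 := rfl
  have key := my_chain p h0 lam d hqv2 n p 0 hrfl
  have hseg : (ysegFrom d.Y p (0 + 1)).submatrix
      (Fin.cast (h0.symm.trans (congrArg α hrfl.symm))) id
      = (d.Y p).submatrix (Fin.cast h0.symm) id := by
    have e : ysegFrom d.Y p (0 + 1) = d.Y (p + 0) * ysegFrom d.Y p 0 := rfl
    have e2 : ysegFrom d.Y p 0 = (1 : Matrix (Fin (α p)) (Fin (α p)) ℂ) := rfl
    rw [e, e2, Matrix.mul_one]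
    rfl
  rw [hseg, ← hA] at key
  set Y' := (d.Y p).submatrix (Fin.cast h0.symm) id with hY'
  set X' := (d.X p).submatrix id (Fin.cast h0.symm) with hX'
  have hAYL : A = Y' * yprod d.Y p := by
    rw [hA, Amat, show yprod d.Y (p + 1) = d.Y p * yprod d.Y p from rfl, ← my_submul_left]
  have hXY : X' * Y' = d.X p * d.Y p := by
    rw [hX', hY', my_cast_mul_cast2]
    exact Matrix.submatrix_id_id _
  have final : (A ^ (n + 1) * recast h0 (d.Y p * d.X p)).trace
      = ((yprod d.Y p * Y') ^ (n + 1) * (d.X p * d.Y p)).trace := by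
    have hre : recast h0 (d.Y p * d.X p) = Y' * X' := by
      rw [recast, my_sub_split, ← hY', ← hX']
    rw [hre, hAYL, ← Matrix.mul_assoc, my_powMN, Matrix.mul_assoc, Matrix.trace_mul_comm,
      Matrix.mul_assoc, hXY]
  rw [← final] at key
  rw [key]
  ring

end
end CM
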